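/- arXiv:2104.12091 — 2 statements merged into one kernel-verified Lean document; each statement's English description precedes it below -/
import Mathlib

section
/- Under the Courant algebroid identities (i) k^{ab} ρⁱ_a ρʲ_b = 0 and (iii) (the Jacobi-type closure of f_{abc}), the tensor N_{abcd} := ρⁱ_d ∂_i f_{abc} satisfies ρⁱ_e k^{ed} N_{abcd} = 0. -/
/-!
Statement 7: under the Courant algebroid identities (i) `k^{ab} ρⁱ_a ρʲ_b = 0` and
(iii) (the Jacobi-type closure of `f_{abc}`), the tensor `N_{abcd} := ρⁱ_d ∂_i f_{abc}`
satisfies `ρⁱ_e k^{ed} N_{abcd} = 0`.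
-/

open scoped BigOperators

/-- Partial derivative of a function on `ℝⁿ` in the `i`-th coordinate direction. -/
noncomputable def pderiv' {n : ℕ} (i : Fin n) (f : (Fin n → ℝ) → ℝ) (x : Fin n → ℝ) : ℝ :=
  deriv (fun t => f (Function.update x i t)) (x i)

/-- `N_{abcd} := ρⁱ_d ∂_i f_{abc}` satisfies `ρⁱ_e k^{ed} N_{abcd} = 0`. -/
theorem N_tensor_orthogonal {n : ℕ} {ι : Type*} [Fintype ι]
    (ρ : ι → Fin n → (Fin n → ℝ) → ℝ) (k : ι → ι → ℝ)
    (f : ι → ι → ι → (Fin n → ℝ) → ℝ)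
    (hρ : ∀ a i, ContDiff ℝ (⊤ : ℕ∞) (ρ a i)) (hf : ∀ a b c, ContDiff ℝ (⊤ : ℕ∞) (f a b c))
    (hksymm : ∀ a b, k a b = k b a)
    (hfalt₁ : ∀ a b c x, f a b c x = - f b a c x)
    (hfalt₂ : ∀ a b c x, f a b c x = - f a c b x)
    (hCA₁ : ∀ i j x, ∑ a, ∑ b, k a b * ρ a i x * ρ b j x = 0)
    (hCA₃ : ∀ a b c d x,
      (∑ j, (ρ d j x * pderiv' j (f a b c) x - ρ a j x * pderiv' j (f b c d) x
        + ρ b j x * pderiv' j (f c d a) x - ρ c j x * pderiv' j (f d a b) x))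
        + ∑ e, ∑ e', k e e' * (f e a b x * f c d e' x + f e a c x * f d b e' x
            + f e a d x * f b c e' x) = 0) :
    ∀ a b c i x,
      ∑ e, ∑ d, ρ e i x * k e d * (∑ j, ρ d j x * pderiv' j (f a b c) x) = 0 := by
  intro a b c i x
  have h : ∑ e : ι, ∑ d : ι, ρ e i x * k e d * (∑ j : Fin n, ρ d j x * pderiv' j (f a b c) x)
      = ∑ j : Fin n, (∑ e : ι, ∑ d : ι, k e d * ρ e i x * ρ d j x) * pderiv' j (f a b c) x := by
    have h1 : ∀ e : ι, ∑ d : ι, ∑ j : Fin n, ρ e i x * k e d * (ρ d j x * pderiv' j (f a b c) x)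
        = ∑ j : Fin n, ∑ d : ι, ρ e i x * k e d * (ρ d j x * pderiv' j (f a b c) x) :=
      fun e => Finset.sum_comm
    simp only [Finset.mul_sum, Finset.sum_mul, h1]
    rw [Finset.sum_comm]
    refine Finset.sum_congr rfl fun j _ => Finset.sum_congr rfl fun e _ =>
      Finset.sum_congr rfl fun d _ => by ring
  rw [h]
  simp [hCA₁ i _ x]
end

section
/- Let H = ½ g^{ij}(x) p'_i p'_j + V'(x) and G_a = ρⁱ_a(x) p'_i + μ_a(x) with Poisson brackets {xⁱ, p'_j} = δⁱ_j, {p'_i, p'_j} = −B_{ij}(x). Then the first-order-in-p' part of the equation {H, G_a} = −g^{ij} Γ_{aj}^b p'_i G_b gives ∂_i μ_a − Γ_{ai}^b μ_b = −ρᵏ_a B_{ik} (the momentum section condition Dμ = γ), and the zeroth-order part gives ρⁱ_a ∂_i V' = 0. -/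
/-!
Statement 10: for `H = ½ g^{ij}(x) p'_i p'_j + V'(x)` and `G_a = ρⁱ_a(x) p'_i + μ_a(x)`
on the twisted cotangent bundle, the first-order-in-`p'` part of the equation
`{H, G_a} = −g^{ij} Γ_{aj}^b p'_i G_b` gives the momentum section condition
`∂_i μ_a − Γ_{ai}^b μ_b = −ρᵏ_a B_{ik}` (i.e. `Dμ = γ`), and the zeroth-order part
gives `ρⁱ_a ∂_i V' = 0`.
-/

open scoped BigOperators

/-- The canonical Poisson bracket on `T*ℝⁿ`. -/
noncomputable def pbracket {n : ℕ} (F G : (Fin n → ℝ) → (Fin n → ℝ) → ℝ) :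
    (Fin n → ℝ) → (Fin n → ℝ) → ℝ :=
  fun x p => ∑ i, (pderiv' i (fun y => F y p) x * pderiv' i (G x) p
    - pderiv' i (F x) p * pderiv' i (fun y => G y p) x)

/-- The Poisson bracket twisted by a 2-form `B`: `{p'_i, p'_j} = −B_{ij}(x)`. -/
noncomputable def pbracketB {n : ℕ} (B : Fin n → Fin n → (Fin n → ℝ) → ℝ)
    (F G : (Fin n → ℝ) → (Fin n → ℝ) → ℝ) :
    (Fin n → ℝ) → (Fin n → ℝ) → ℝ :=
  fun x p => pbracket F G x p
    - ∑ i, ∑ j, B i j x * pderiv' i (F x) p * pderiv' j (G x) p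

private lemma differentiable_update' {n : ℕ} (x : Fin n → ℝ) (i : Fin n) :
    Differentiable ℝ (fun t : ℝ => Function.update x i t) := by
  apply differentiable_pi.mpr
  intro j
  simp only [Function.update_apply]
  by_cases h : j = i <;> simp [h]

private lemma hasDerivAt_comp_update' {n : ℕ} {f : (Fin n → ℝ) → ℝ} (hf : ContDiff ℝ (⊤ : ℕ∞) f)
    (i : Fin n) (x : Fin n → ℝ) :
    HasDerivAt (fun t => f (Function.update x i t)) (pderiv' i f x) (x i) :=
  ((hf.differentiable (by simp)).comp (differentiable_update' x i) (x i)).hasDerivAt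

private lemma hasDerivAt_update_apply' {n : ℕ} (p : Fin n → ℝ) (i l : Fin n) :
    HasDerivAt (fun t : ℝ => Function.update p i t l) (if l = i then 1 else 0) (p i) := by
  by_cases h : l = i <;>
    simp only [Function.update_apply, h, if_true, if_false]
  · exact hasDerivAt_id' (p i) |>.congr_deriv rfl
  · exact hasDerivAt_const _ _

private lemma pderiv'_lin {n : ℕ} (r : Fin n → ℝ) (c : ℝ) (i : Fin n) (p : Fin n → ℝ) :
    pderiv' i (fun q => (∑ l, r l * q l) + c) p = r i := by
  have h : HasDerivAt (fun t => (∑ l, r l * Function.update p i t l) + c)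
      (∑ l, r l * if l = i then 1 else 0) (p i) :=
    (HasDerivAt.fun_sum fun l _ => (hasDerivAt_update_apply' p i l).const_mul (r l)).add_const c
  have := h.deriv
  simp only [pderiv']
  rw [this]
  simp [mul_ite]

private lemma pderiv'_quad {n : ℕ} (G : Fin n → Fin n → ℝ) (hs : ∀ j l, G j l = G l j) (c : ℝ)
    (i : Fin n) (p : Fin n → ℝ) :
    pderiv' i (fun q => (1/2 : ℝ) * (∑ j, ∑ l, G j l * q j * q l) + c) p
      = ∑ j, G i j * p j := by
  have h : HasDerivAt
      (fun t => (1/2 : ℝ) * (∑ j, ∑ l, G j l * Function.update p i t j * Function.update p i t l) + c)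
      ((1/2 : ℝ) * (∑ j, ∑ l, ((G j l * (if j = i then 1 else 0)) * p l
          + (G j l * p j) * (if l = i then 1 else 0)))) (p i) := by
    refine HasDerivAt.add_const c ?_
    refine HasDerivAt.const_mul _ ?_
    refine HasDerivAt.fun_sum fun j _ => ?_
    refine HasDerivAt.fun_sum fun l _ => ?_
    have h1 := (hasDerivAt_update_apply' p i j).const_mul (G j l)
    have := h1.fun_mul (hasDerivAt_update_apply' p i l)
    simpa [Function.update_eq_self] using this
  have hd := h.deriv
  simp only [pderiv']
  rw [hd]
  simp only [Finset.sum_add_distrib, mul_ite, ite_mul, mul_one, mul_zero, zero_mul, one_mul,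
    Finset.sum_ite_eq', Finset.mem_univ, if_true]
  rw [mul_add]
  have h2 : ∀ x : Fin n, (∑ x1, if x = i then G x x1 * p x1 else 0)
      = if x = i then ∑ x1, G x x1 * p x1 else 0 := by
    intro x; split <;> simp
  rw [Finset.sum_congr rfl fun x _ => h2 x, Finset.sum_ite_eq']
  simp only [Finset.mem_univ, if_true]
  have h3 : ∑ x, G x i * p x = ∑ x, G i x * p x :=
    Finset.sum_congr rfl fun x _ => by rw [hs x i]
  rw [h3]
  ring

private lemma pderiv'_lin_x {n : ℕ} (r : Fin n → (Fin n → ℝ) → ℝ) (m : (Fin n → ℝ) → ℝ)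
    (hr : ∀ l, ContDiff ℝ (⊤ : ℕ∞) (r l)) (hm : ContDiff ℝ (⊤ : ℕ∞) m) (p : Fin n → ℝ)
    (i : Fin n) (x : Fin n → ℝ) :
    pderiv' i (fun y => (∑ l, r l y * p l) + m y) x
      = (∑ l, pderiv' i (r l) x * p l) + pderiv' i m x := by
  have h : HasDerivAt
      (fun t => (∑ l, r l (Function.update x i t) * p l) + m (Function.update x i t))
      ((∑ l, pderiv' i (r l) x * p l) + pderiv' i m x) (x i) :=
    (HasDerivAt.fun_sum fun l _ => (hasDerivAt_comp_update' (hr l) i x).mul_const (p l)).add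
      (hasDerivAt_comp_update' hm i x)
  exact h.deriv

private lemma pderiv'_quad_x {n : ℕ} (G : Fin n → Fin n → (Fin n → ℝ) → ℝ) (c : (Fin n → ℝ) → ℝ)
    (hG : ∀ j l, ContDiff ℝ (⊤ : ℕ∞) (G j l)) (hc : ContDiff ℝ (⊤ : ℕ∞) c) (p : Fin n → ℝ)
    (i : Fin n) (x : Fin n → ℝ) :
    pderiv' i (fun y => (1/2 : ℝ) * (∑ j, ∑ l, G j l y * p j * p l) + c y) x
      = (1/2 : ℝ) * (∑ j, ∑ l, pderiv' i (G j l) x * p j * p l) + pderiv' i c x := by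
  have h : HasDerivAt
      (fun t => (1/2 : ℝ) * (∑ j, ∑ l, G j l (Function.update x i t) * p j * p l)
        + c (Function.update x i t))
      ((1/2 : ℝ) * (∑ j, ∑ l, pderiv' i (G j l) x * p j * p l) + pderiv' i c x) (x i) :=
    ((HasDerivAt.fun_sum fun j _ => HasDerivAt.fun_sum fun l _ =>
        ((hasDerivAt_comp_update' (hG j l) i x).mul_const (p j)).mul_const (p l)).const_mul
        ((1/2 : ℝ))).add (hasDerivAt_comp_update' hc i x)
  exact h.deriv

/-- Decomposing `{H, G_a} = −g^{ij} Γ_{aj}^b p'_i G_b` by degree in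
`p'` yields the momentum section condition (H2) and the invariance of the potential. -/
theorem inhomogeneous_hamiltonian_momentum_section {n : ℕ} {ι : Type*} [Fintype ι]
    (g : Fin n → Fin n → (Fin n → ℝ) → ℝ) (V' : (Fin n → ℝ) → ℝ)
    (ρ : ι → Fin n → (Fin n → ℝ) → ℝ) (μ : ι → (Fin n → ℝ) → ℝ)
    (B : Fin n → Fin n → (Fin n → ℝ) → ℝ)
    (Γ : ι → ι → Fin n → (Fin n → ℝ) → ℝ)  -- lowered connection coefficients Γ_{ai}^b = Γ a b i
    (hg : ∀ i j, ContDiff ℝ (⊤ : ℕ∞) (g i j)) (hV : ContDiff ℝ (⊤ : ℕ∞) V')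
    (hρ : ∀ a i, ContDiff ℝ (⊤ : ℕ∞) (ρ a i)) (hμ : ∀ a, ContDiff ℝ (⊤ : ℕ∞) (μ a))
    (hB : ∀ i j, ContDiff ℝ (⊤ : ℕ∞) (B i j)) (hΓ : ∀ a b i, ContDiff ℝ (⊤ : ℕ∞) (Γ a b i))
    (hgsymm : ∀ i j x, g i j x = g j i x) (hBalt : ∀ i j x, B i j x = - B j i x)
    (hginv : ∃ gl : Fin n → Fin n → (Fin n → ℝ) → ℝ,
      ∀ i j x, ∑ l, g i l x * gl l j x = if i = j then 1 else 0)
    (heq : ∀ a x p,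
      pbracketB B (fun x p => (1/2 : ℝ) * (∑ i, ∑ j, g i j x * p i * p j) + V' x)
        (fun x p => (∑ i, ρ a i x * p i) + μ a x) x p
        = - ∑ b, ∑ i, ∑ j, g i j x * Γ a b j x * p i
            * ((∑ l, ρ b l x * p l) + μ b x)) :
    (∀ a i x, pderiv' i (μ a) x - ∑ b, Γ a b i x * μ b x
        = - ∑ l, ρ a l x * B i l x) ∧
    (∀ a x, ∑ i, ρ a i x * pderiv' i V' x = 0) := by
  obtain ⟨gl, hgl⟩ := hginv
  have main : ∀ (a : ι) (x : Fin n → ℝ),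
      (∀ p : Fin n → ℝ,
        (∑ i, (((1/2 : ℝ) * (∑ j, ∑ l, pderiv' i (g j l) x * p j * p l) + pderiv' i V' x)
            * ρ a i x
          - (∑ j, g i j x * p j) * ((∑ l, pderiv' i (ρ a l) x * p l) + pderiv' i (μ a) x)))
        - ∑ i, ∑ j, (B i j x * ∑ l, g i l x * p l) * ρ a j x
        = - ∑ b, ∑ i, ∑ j, g i j x * Γ a b j x * p i * ((∑ l, ρ b l x * p l) + μ b x)) := by
    intro a x p
    have h3 := heq a x p
    simp only [pbracketB, pbracket] at h3
    simp only [pderiv'_quad_x g V' hg hV,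
      pderiv'_lin_x (ρ a) (μ a) (hρ a) (hμ a),
      pderiv'_quad (fun j l => g j l x) (fun j l => hgsymm j l x) (V' x),
      pderiv'_lin (fun l => ρ a l x) (μ a x)] at h3
    exact h3
  constructor
  · intro a m x
    have h3 := main a x
    have key : ∀ k : Fin n,
        (∑ i, g i k x * pderiv' i (μ a) x) + (∑ i, ∑ j, B i j x * g i k x * ρ a j x)
          = ∑ b, ∑ j, g k j x * Γ a b j x * μ b x := by
      intro k
      have hp := h3 (Pi.single k 1)
      have hm := h3 (Pi.single k (-1))
      simp only [Pi.single_apply, mul_ite, ite_mul, mul_zero, zero_mul, mul_one, one_mul,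
        mul_neg, neg_mul, neg_neg, Finset.sum_ite_eq, Finset.sum_ite_eq', Finset.mem_univ,
        if_true, Finset.sum_ite_irrel, Finset.sum_const_zero] at hp hm
      simp only [mul_add, add_mul, sub_mul, mul_sub, neg_add, neg_sub, neg_mul, mul_neg,
        neg_neg, Finset.sum_add_distrib, Finset.sum_sub_distrib, Finset.sum_ite_eq',
        Finset.mem_univ, if_true, Finset.sum_neg_distrib] at hp hm
      linarith [hp, hm]
    have key2 : ∀ k : Fin n,
        ∑ i, g k i x * (pderiv' i (μ a) x - (∑ b, Γ a b i x * μ b x)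
          + ∑ l, ρ a l x * B i l x) = 0 := by
      intro k
      have c1 : ∑ i, g k i x * pderiv' i (μ a) x = ∑ i, g i k x * pderiv' i (μ a) x :=
        Finset.sum_congr rfl fun i _ => by rw [hgsymm]
      have c2 : ∑ i, ∑ b, g k i x * (Γ a b i x * μ b x)
          = ∑ b, ∑ j, g k j x * Γ a b j x * μ b x := by
        rw [Finset.sum_comm]
        exact Finset.sum_congr rfl fun b _ => Finset.sum_congr rfl fun j _ => by ring
      have c3 : ∑ i, ∑ l, g k i x * (ρ a l x * B i l x)
          = ∑ i, ∑ j, B i j x * g i k x * ρ a j x := by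
        refine Finset.sum_congr rfl fun i _ => Finset.sum_congr rfl fun l _ => ?_
        rw [hgsymm k i x]; ring
      simp only [mul_sub, mul_add, Finset.sum_sub_distrib, Finset.sum_add_distrib,
        Finset.mul_sum]
      rw [c1, c2, c3]
      linarith [key k]
    -- invert the metric
    have hMN : (Matrix.of fun i j => g i j x) * (Matrix.of fun i j => gl i j x) = 1 := by
      ext i j
      rw [Matrix.mul_apply]
      simpa [Matrix.one_apply] using hgl i j x
    have hNM := mul_eq_one_comm.mp hMN
    have e1 : ∀ i' : Fin n, (∑ k, gl m k x * g k i' x) = if m = i' then 1 else 0 := by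
      intro i'
      have h := congrFun (congrFun hNM m) i'
      simpa [Matrix.mul_apply, Matrix.one_apply, Matrix.of_apply] using h
    have hYm : pderiv' m (μ a) x - (∑ b, Γ a b m x * μ b x) + ∑ l, ρ a l x * B m l x = 0 := by
      calc pderiv' m (μ a) x - (∑ b, Γ a b m x * μ b x) + ∑ l, ρ a l x * B m l x
          = ∑ i, (if m = i then (1:ℝ) else 0) * (pderiv' i (μ a) x
              - (∑ b, Γ a b i x * μ b x) + ∑ l, ρ a l x * B i l x) := by
            simp [ite_mul]
        _ = ∑ i, (∑ k, gl m k x * g k i x) * (pderiv' i (μ a) x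
              - (∑ b, Γ a b i x * μ b x) + ∑ l, ρ a l x * B i l x) :=
            Finset.sum_congr rfl fun i _ => by rw [e1 i]
        _ = ∑ k, gl m k x * ∑ i, g k i x * (pderiv' i (μ a) x
              - (∑ b, Γ a b i x * μ b x) + ∑ l, ρ a l x * B i l x) := by
            simp only [Finset.sum_mul]
            rw [Finset.sum_comm]
            refine Finset.sum_congr rfl fun k _ => ?_
            rw [Finset.mul_sum]
            exact Finset.sum_congr rfl fun i _ => mul_assoc _ _ _
        _ = 0 := by simp [key2]
    linarith [hYm]
  · intro a x
    have h0 := main a x 0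
    simp only [Pi.zero_apply, mul_zero, zero_mul, Finset.sum_const_zero, add_zero, zero_add,
      sub_zero, neg_zero, mul_one] at h0
    rw [Finset.sum_congr rfl fun i (_ : i ∈ Finset.univ) =>
      mul_comm (ρ a i x) (pderiv' i V' x)]
    exact h0
end
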